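/- arXiv:1905.08656 — 5 statements merged into one kernel-verified Lean document; each statement's English description precedes it below -/
import Mathlib

section
/- A bounded subset K of the dual X* of a Banach space X is a p-Right set if and only if the natural evaluation map E_X : X → B(K), defined by E_X(x)(x*) = x*(x), is a Dunford-Pettis p-convergent operator. -/
open Filter Topology NormedSpace Bornology
open scoped ENNReal ContinuousMap ZeroAtInfty

/-- A sequence is weakly null. -/
def WeaklyNull {X : Type*} [NormedAddCommGroup X] [NormedSpace ℝ X] (x : ℕ → X) : Prop :=
  ∀ f : StrongDual ℝ X, Tendsto (fun n => f (x n)) atTop (𝓝 0)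

/-- A sequence is weakly `p`-summable; for `p = ∞` this means weakly null. -/
def WeaklyPSummable {X : Type*} [NormedAddCommGroup X] [NormedSpace ℝ X] (p : ℝ≥0∞)
    (x : ℕ → X) : Prop :=
  if p = ∞ then WeaklyNull x else ∀ f : StrongDual ℝ X, Memℓp (fun n => f (x n)) p

/-- A Dunford-Pettis subset of a Banach space: a bounded set on which every weakly null
sequence of functionals converges uniformly to zero. -/
def IsDunfordPettisSet {X : Type*} [NormedAddCommGroup X] [NormedSpace ℝ X] (A : Set X) : Prop :=
  IsBounded A ∧ ∀ f : ℕ → StrongDual ℝ X, WeaklyNull f →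
    Tendsto (fun n => ⨆ a : A, |f n a.1|) atTop (𝓝 0)

/-- A `p`-Right null sequence: weakly `p`-summable and a Dunford-Pettis set. -/
def PRightNull {X : Type*} [NormedAddCommGroup X] [NormedSpace ℝ X] (p : ℝ≥0∞)
    (x : ℕ → X) : Prop :=
  WeaklyPSummable p x ∧ IsDunfordPettisSet (Set.range x)

/-- A `p`-Right subset of the dual: every `p`-Right null sequence in `X` converges to `0`
uniformly on `K`. -/
def IsPRightSet {X : Type*} [NormedAddCommGroup X] [NormedSpace ℝ X] (p : ℝ≥0∞)
    (K : Set (StrongDual ℝ X)) : Prop :=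
  IsBounded K ∧ ∀ x : ℕ → X, PRightNull p x →
    Tendsto (fun n => ⨆ f : K, |f.1 (x n)|) atTop (𝓝 0)

/-- A `p`-Right* subset of `X`: every `p`-Right null sequence in `X*` converges to `0`
uniformly on `K`. -/
def IsPRightStarSet {X : Type*} [NormedAddCommGroup X] [NormedSpace ℝ X] (p : ℝ≥0∞)
    (K : Set X) : Prop :=
  IsBounded K ∧ ∀ f : ℕ → StrongDual ℝ X, PRightNull p f →
    Tendsto (fun n => ⨆ a : K, |f n a.1|) atTop (𝓝 0)

/-- A `p`-(V) subset of the dual. -/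
def IsPVSet {X : Type*} [NormedAddCommGroup X] [NormedSpace ℝ X] (p : ℝ≥0∞)
    (K : Set (StrongDual ℝ X)) : Prop :=
  IsBounded K ∧ ∀ x : ℕ → X, WeaklyPSummable p x →
    Tendsto (fun n => ⨆ f : K, |f.1 (x n)|) atTop (𝓝 0)

/-- A `p`-(V*) subset of `X`. -/
def IsPVStarSet {X : Type*} [NormedAddCommGroup X] [NormedSpace ℝ X] (p : ℝ≥0∞)
    (K : Set X) : Prop :=
  IsBounded K ∧ ∀ f : ℕ → StrongDual ℝ X, WeaklyPSummable p f →
    Tendsto (fun n => ⨆ a : K, |f n a.1|) atTop (𝓝 0)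

/-- A Dunford-Pettis `p`-convergent operator maps `p`-Right null sequences to norm
null sequences. -/
def DPpConvergent {X Y : Type*} [NormedAddCommGroup X] [NormedSpace ℝ X] [NormedAddCommGroup Y]
    [NormedSpace ℝ Y] (p : ℝ≥0∞) (T : X →L[ℝ] Y) : Prop :=
  ∀ x : ℕ → X, PRightNull p x → Tendsto (fun n => ‖T (x n)‖) atTop (𝓝 0)

/-- The adjoint of a bounded operator between normed spaces. -/
noncomputable def adjointOp {X Y : Type*} [NormedAddCommGroup X] [NormedSpace ℝ X]
    [NormedAddCommGroup Y] [NormedSpace ℝ Y] (T : X →L[ℝ] Y) : StrongDual ℝ Y →L[ℝ] StrongDual ℝ X :=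
  (ContinuousLinearMap.compL ℝ X Y ℝ).flip T

/-- Weak convergence of a sequence. -/
def WeaklyConvTo {X : Type*} [NormedAddCommGroup X] [NormedSpace ℝ X] (x : ℕ → X) (a : X) : Prop :=
  ∀ f : StrongDual ℝ X, Tendsto (fun n => f (x n)) atTop (𝓝 (f a))

/-- A relatively weakly compact set (sequentially): every sequence in `A` has a weakly
convergent subsequence with limit in the space. -/
def RelWeaklyCompact {X : Type*} [NormedAddCommGroup X] [NormedSpace ℝ X] (A : Set X) : Prop :=
  ∀ x : ℕ → X, (∀ n, x n ∈ A) →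
    ∃ a : X, ∃ φ : ℕ → ℕ, StrictMono φ ∧ WeaklyConvTo (fun n => x (φ n)) a

/-- A relatively weakly `q`-compact set: every sequence in `A` has a weakly `q`-convergent
subsequence with limit in the space. -/
def RelWeaklyQCompact {X : Type*} [NormedAddCommGroup X] [NormedSpace ℝ X] (q : ℝ≥0∞)
    (A : Set X) : Prop :=
  ∀ x : ℕ → X, (∀ n, x n ∈ A) →
    ∃ a : X, ∃ φ : ℕ → ℕ, StrictMono φ ∧ WeaklyPSummable q (fun n => x (φ n) - a)

/-- The `p`-sequentially Right property: every `p`-Right subset of the dual is relatively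
weakly compact. -/
def PSR (p : ℝ≥0∞) (X : Type*) [NormedAddCommGroup X] [NormedSpace ℝ X] : Prop :=
  ∀ K : Set (StrongDual ℝ X), IsPRightSet p K → RelWeaklyCompact K

/-- The `p`-sequentially Right* property: every `p`-Right* subset is relatively weakly
compact. -/
def PSRStar (p : ℝ≥0∞) (X : Type*) [NormedAddCommGroup X] [NormedSpace ℝ X] : Prop :=
  ∀ K : Set X, IsPRightStarSet p K → RelWeaklyCompact K

/-- a bounded `K ⊆ X*` is a `p`-Right set iff the evaluation map
`E_X : X → B(K)` (here `B(K) = ℓ∞(K)`, the bounded functions on `K`) is Dunford-Pettis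
`p`-convergent. -/
theorem stmt1 {p : ℝ≥0∞} (hp : 1 ≤ p) {X : Type*} [NormedAddCommGroup X] [NormedSpace ℝ X]
    [CompleteSpace X] (K : Set (StrongDual ℝ X)) (hK : IsBounded K)
    (E : X →L[ℝ] lp (fun _ : K => ℝ) ∞)
    (hE : ∀ (x : X) (f : K), (E x : ∀ _ : K, ℝ) f = f.1 x) :
    IsPRightSet p K ↔ DPpConvergent p E := by
  have key : ∀ x : X, ‖E x‖ = ⨆ f : K, |f.1 x| := by
    intro x
    rw [lp.norm_eq_ciSup]
    congr 1; funext f; rw [hE x f, Real.norm_eq_abs]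
  constructor
  · rintro ⟨-, h⟩ x hx
    simpa only [key] using h x hx
  · intro h
    refine ⟨hK, fun x hx => ?_⟩
    simpa only [key] using h x hx
end

section
/- A bounded subset K of a Banach space X is a p-Right* set if and only if there exist a Banach space Y and a bounded linear operator T : Y → X such that both T and T* are Dunford-Pettis p-convergent and K ⊆ T(B_Y). -/
open Filter Topology NormedSpace Bornology
open scoped ENNReal ContinuousMap ZeroAtInfty

instance factOne : Fact ((1:ℝ≥0∞) ≤ 1) := ⟨le_rfl⟩
variable {ι : Type*}
noncomputable def coordCLM (ι : Type*) (i : ι) : lp (fun _ : ι => ℝ) 1 →L[ℝ] ℝ :=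
  LinearMap.mkContinuous
    { toFun := fun f => f i
      map_add' := fun f g => congrFun (lp.coeFn_add f g) i
      map_smul' := fun c f => by simp }
    1 (fun f => by rw [one_mul]; exact lp.norm_apply_le_norm one_ne_zero f i)
@[simp] lemma coordCLM_apply (i : ι) (f : lp (fun _ : ι => ℝ) 1) : coordCLM ι i f = f i := rfl
lemma l1_hasSum_abs (f : lp (fun _ : ι => ℝ) 1) :
    HasSum (fun i => |f i|) ‖f‖ := by
  have h := lp.hasSum_norm (p := (1:ℝ≥0∞)) (by norm_num) f
  simpa [Real.norm_eq_abs] using h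
lemma l1_sum_abs_le (f : lp (fun _ : ι => ℝ) 1) (s : Finset ι) :
    ∑ i ∈ s, |f i| ≤ ‖f‖ :=
  sum_le_hasSum s (fun i _ => abs_nonneg _) (l1_hasSum_abs f)

noncomputable def signFn (s : Finset ι) (σ : ι → ℝ) : lp (fun _ : ι => ℝ) 1 →L[ℝ] ℝ :=
  ∑ i ∈ s, σ i • coordCLM ι i

lemma signFn_apply (s : Finset ι) (σ : ι → ℝ) (f : lp (fun _ : ι => ℝ) 1) :
    signFn s σ f = ∑ i ∈ s, σ i * f i := by
  simp [signFn]

lemma real_sign_mul_self (x : ℝ) : Real.sign x * x = |x| := by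
  rcases lt_trichotomy x 0 with h | h | h
  · rw [Real.sign_of_neg h, abs_of_neg h]; ring
  · simp [h]
  · rw [Real.sign_of_pos h, abs_of_pos h]; ring

lemma abs_sign_le (x : ℝ) : |Real.sign x| ≤ 1 := by
  rcases Real.sign_apply_eq x with h | h | h <;> simp [h]

lemma signFn_combo_norm_le {M : ℕ} (A : ℕ → Finset ι)
    (hA : ∀ ⦃m m'⦄, m < m' → Disjoint (A m) (A m'))
    (σ : ℕ → ι → ℝ) (hσ : ∀ m i, |σ m i| ≤ 1) (c : ℕ → ℝ) (hc : ∀ m, |c m| ≤ 1) :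
    ‖∑ m ∈ Finset.range M, c m • signFn (A m) (σ m)‖ ≤ 1 := by
  classical
  refine ContinuousLinearMap.opNorm_le_bound _ zero_le_one fun f => ?_
  rw [one_mul]
  have hd : (↑(Finset.range M) : Set ℕ).PairwiseDisjoint A := by
    intro a _ b _ hab
    rcases lt_or_gt_of_ne hab with h | h
    · exact hA h
    · exact (hA h).symm
  calc ‖(∑ m ∈ Finset.range M, c m • signFn (A m) (σ m)) f‖
      = |∑ m ∈ Finset.range M, c m * ∑ i ∈ A m, σ m i * f i| := by
        simp [ContinuousLinearMap.sum_apply, signFn_apply, Real.norm_eq_abs]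
    _ ≤ ∑ m ∈ Finset.range M, |c m * ∑ i ∈ A m, σ m i * f i| :=
        Finset.abs_sum_le_sum_abs _ _
    _ ≤ ∑ m ∈ Finset.range M, ∑ i ∈ A m, |f i| := by
        refine Finset.sum_le_sum fun m _ => ?_
        rw [abs_mul]
        calc |c m| * |∑ i ∈ A m, σ m i * f i|
            ≤ 1 * ∑ i ∈ A m, |σ m i * f i| :=
              mul_le_mul (hc m) (Finset.abs_sum_le_sum_abs _ _) (abs_nonneg _) zero_le_one
          _ = ∑ i ∈ A m, |σ m i| * |f i| := by rw [one_mul]; exact Finset.sum_congr rfl fun i _ => abs_mul _ _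
          _ ≤ ∑ i ∈ A m, 1 * |f i| :=
              Finset.sum_le_sum fun i _ => mul_le_mul_of_nonneg_right (hσ m i) (abs_nonneg _)
          _ = ∑ i ∈ A m, |f i| := by simp
    _ = ∑ i ∈ (Finset.range M).biUnion A, |f i| := (Finset.sum_biUnion hd).symm
    _ ≤ ‖f‖ := l1_sum_abs_le f _

lemma WeaklyPSummable.weaklyNull {X : Type*} [NormedAddCommGroup X] [NormedSpace ℝ X]
    {p : ℝ≥0∞} (hp : 1 ≤ p) {x : ℕ → X} (h : WeaklyPSummable p x) : WeaklyNull x := by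
  unfold WeaklyPSummable at h
  split_ifs at h with hp'
  · exact h
  · intro f
    have hp0 : p ≠ 0 := by
      intro h0; rw [h0] at hp; exact absurd hp (by simp)
    have ht : 0 < p.toReal := ENNReal.toReal_pos hp0 hp'
    have hs : Summable fun n => ‖f (x n)‖ ^ p.toReal := (memℓp_gen_iff ht).1 (h f)
    have h0 : Tendsto (fun n => ‖f (x n)‖ ^ p.toReal) atTop (𝓝 0) := hs.tendsto_atTop_zero
    have hcont : Tendsto (fun u : ℝ => u ^ (1 / p.toReal)) (𝓝 0) (𝓝 0) := by
      have h1 : (0:ℝ) ^ (1 / p.toReal) = 0 := Real.zero_rpow (by positivity)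
      have := (Real.continuousAt_rpow_const 0 (1 / p.toReal)
        (Or.inr (by positivity))).tendsto
      rwa [h1] at this
    have hnorm : Tendsto (fun n => ‖f (x n)‖) atTop (𝓝 0) := by
      refine (hcont.comp h0).congr fun n => ?_
      simp only [Function.comp_apply]
      rw [← Real.rpow_mul (norm_nonneg _), mul_one_div_cancel ht.ne', Real.rpow_one]
    simpa using tendsto_zero_iff_norm_tendsto_zero.mpr hnorm

lemma l1_pRightNull_norm_tendsto {p : ℝ≥0∞} (hp : 1 ≤ p) {ι : Type*}
    (y : ℕ → lp (fun _ : ι => ℝ) 1) (h : PRightNull p y) :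
    Tendsto (fun n => ‖y n‖) atTop (𝓝 0) := by
  classical
  by_contra hcon
  have hweak : WeaklyNull y := h.1.weaklyNull hp
  obtain ⟨ε, hε, hfr⟩ : ∃ ε > 0, ∃ᶠ n in atTop, ε ≤ ‖y n‖ := by
    rw [Metric.tendsto_atTop] at hcon
    push_neg at hcon
    obtain ⟨ε, hε, hcon⟩ := hcon
    refine ⟨ε, hε, Filter.frequently_atTop.2 fun N => ?_⟩
    obtain ⟨n, hn, hd⟩ := hcon N
    exact ⟨n, hn, by simpa [Real.dist_eq, abs_of_nonneg (norm_nonneg _)] using hd⟩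
  obtain ⟨φ, hφ, hφε⟩ := Filter.extraction_of_frequently_atTop hfr
  set z : ℕ → lp (fun _ : ι => ℝ) 1 := fun k => y (φ k) with hzdef
  have hzε : ∀ k, ε ≤ ‖z k‖ := hφε
  have hcoordz : ∀ S : Finset ι, Tendsto (fun n => ∑ i ∈ S, |z n i|) atTop (𝓝 0) := by
    intro S
    have hco : ∀ i : ι, Tendsto (fun n => |z n i|) atTop (𝓝 0) := by
      intro i
      have h1 : Tendsto (fun n => (y n) i) atTop (𝓝 0) := by
        simpa using hweak (coordCLM ι i)
      simpa using (h1.comp hφ.tendsto_atTop).abs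
    simpa using tendsto_finset_sum S (fun i _ => hco i)
  have step : ∀ (n : ℕ) (S : Finset ι), ∃ q : ℕ × Finset ι, n < q.1 ∧ S ⊆ q.2 ∧
      (∑ i ∈ S, |z q.1 i|) ≤ ε/8 ∧ ‖z q.1‖ - ∑ i ∈ q.2, |z q.1 i| ≤ ε/8 := by
    intro n S
    have h1 : ∀ᶠ m in atTop, (∑ i ∈ S, |z m i|) < ε/8 :=
      (hcoordz S).eventually_lt_const (by positivity)
    obtain ⟨N, hN⟩ := Filter.eventually_atTop.1 h1
    have hm : n < max N (n+1) := lt_of_lt_of_le (Nat.lt_succ_self n) (le_max_right _ _)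
    have hsum := l1_hasSum_abs (z (max N (n+1)))
    obtain ⟨s₀, hs₀⟩ := Metric.tendsto_atTop.1 hsum (ε/8) (by positivity)
    refine ⟨(max N (n+1), s₀ ∪ S), hm, Finset.subset_union_right,
      le_of_lt (hN _ (le_max_left _ _)), ?_⟩
    have h2 := hs₀ (s₀ ∪ S) (Finset.le_iff_subset.mpr Finset.subset_union_left)
    rw [Real.dist_eq] at h2
    have h3 := abs_lt.1 h2
    simp only at h3 ⊢
    linarith [h3.1]
  choose F hF1 hF2 hF3 hF4 using step
  set u : ℕ → ℕ × Finset ι := fun m => Nat.rec (F 0 ∅) (fun _ q => F q.1 q.2) m with hu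
  set nn : ℕ → ℕ := fun m => (u m).1 with hnn
  set S : ℕ → Finset ι := fun m => (u m).2 with hS
  have hcap : ∀ m, ‖z (nn m)‖ - ∑ i ∈ S m, |z (nn m) i| ≤ ε/8 := by
    intro m
    cases m with
    | zero => exact hF4 0 ∅
    | succ k => exact hF4 (u k).1 (u k).2
  have hsub : ∀ m, S m ⊆ S (m+1) := fun m => hF2 (u m).1 (u m).2
  have hsmall : ∀ m, (∑ i ∈ S m, |z (nn (m+1)) i|) ≤ ε/8 := fun m => hF3 (u m).1 (u m).2
  have hSmono : Monotone S := monotone_nat_of_le_succ fun n => Finset.le_iff_subset.mpr (hsub n)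
  set A : ℕ → Finset ι := fun m => S (m+1) \ S m with hA
  set v : ℕ → lp (fun _ : ι => ℝ) 1 := fun m => z (nn (m+1)) with hv
  set σ : ℕ → ι → ℝ := fun m i => Real.sign (v m i) with hσ
  set g : ℕ → StrongDual ℝ (lp (fun _ : ι => ℝ) 1) := fun m => signFn (A m) (σ m) with hg
  have hAdisj : ∀ ⦃m m'⦄, m < m' → Disjoint (A m) (A m') := by
    intro m m' hmm'
    have h1 : A m ≤ S m' := by
      refine Finset.le_iff_subset.mpr fun x hx => ?_
      exact hSmono (Nat.succ_le_of_lt hmm') (Finset.sdiff_subset hx)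
    exact Finset.sdiff_disjoint.symm.mono_left h1
  have hglb : ∀ m, 3*ε/4 ≤ g m (v m) := by
    intro m
    have he : g m (v m) = ∑ i ∈ A m, |v m i| := by
      rw [hg, signFn_apply]
      exact Finset.sum_congr rfl fun i _ => real_sign_mul_self _
    have hsplit : ∑ i ∈ A m, |v m i| = ∑ i ∈ S (m+1), |v m i| - ∑ i ∈ S m, |v m i| :=
      Finset.sum_sdiff_eq_sub (hsub m)
    have h1 : ‖v m‖ - ∑ i ∈ S (m+1), |v m i| ≤ ε/8 := hcap (m+1)
    have h2 := hsmall m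
    have h3 := hzε (nn (m+1))
    rw [he, hsplit]
    have : ‖v m‖ = ‖z (nn (m+1))‖ := by rw [hv]
    linarith [this ▸ h1]
  have hgnull : WeaklyNull g := by
    intro G
    have habs : Summable fun m => |G (g m)| := by
      refine summable_of_sum_range_le (c := ‖G‖) (fun m => abs_nonneg _) (fun M => ?_)
      have he : ∑ m ∈ Finset.range M, |G (g m)|
          = G (∑ m ∈ Finset.range M, Real.sign (G (g m)) • g m) := by
        rw [map_sum]
        exact Finset.sum_congr rfl fun m _ => by
          rw [map_smul, smul_eq_mul, real_sign_mul_self]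
      rw [he]
      have hb : ‖∑ m ∈ Finset.range M, Real.sign (G (g m)) • g m‖ ≤ 1 := by
        rw [hg]
        exact signFn_combo_norm_le A hAdisj σ (fun m i => abs_sign_le _)
          (fun m => Real.sign (G (g m))) (fun m => abs_sign_le _)
      calc G (∑ m ∈ Finset.range M, Real.sign (G (g m)) • g m)
          ≤ ‖G (∑ m ∈ Finset.range M, Real.sign (G (g m)) • g m)‖ := le_abs_self _
        _ ≤ ‖G‖ * ‖∑ m ∈ Finset.range M, Real.sign (G (g m)) • g m‖ := G.le_opNorm _
        _ ≤ ‖G‖ * 1 := mul_le_mul_of_nonneg_left hb (norm_nonneg _)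
        _ = ‖G‖ := mul_one _
    have h0 := habs.tendsto_atTop_zero
    rw [tendsto_zero_iff_norm_tendsto_zero]
    simpa [Real.norm_eq_abs] using h0
  obtain ⟨Cb, hCb⟩ := isBounded_iff_forall_norm_le.mp h.2.1
  have hDPg := h.2.2 g hgnull
  have hge : ∀ m, 3*ε/4 ≤ ⨆ a : Set.range y, |g m a.1| := by
    intro m
    have hmem : v m ∈ Set.range y := ⟨φ (nn (m+1)), rfl⟩
    have hbdd : BddAbove (Set.range fun a : Set.range y => |g m a.1|) := by
      refine ⟨‖g m‖ * Cb, ?_⟩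
      rintro x ⟨a, rfl⟩
      calc |g m a.1| ≤ ‖g m‖ * ‖a.1‖ := by
            simpa [Real.norm_eq_abs] using (g m).le_opNorm a.1
        _ ≤ ‖g m‖ * Cb := mul_le_mul_of_nonneg_left (hCb a.1 a.2) (norm_nonneg _)
    calc 3*ε/4 ≤ g m (v m) := hglb m
      _ ≤ |g m (v m)| := le_abs_self _
      _ ≤ ⨆ a : Set.range y, |g m a.1| := le_ciSup hbdd ⟨v m, hmem⟩
  obtain ⟨m, hm⟩ := (hDPg.eventually_lt_const (by positivity : (0:ℝ) < 3*ε/4)).exists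
  linarith [hge m]

lemma l1_norm_eq {ι : Type*} (f : lp (fun _ : ι => ℝ) 1) : ‖f‖ = ∑' i, |f i| :=
  (l1_hasSum_abs f).tsum_eq.symm

lemma l1_summable_abs {ι : Type*} (f : lp (fun _ : ι => ℝ) 1) : Summable fun i => |f i| :=
  (l1_hasSum_abs f).summable

section SumOp

variable {X : Type*} [NormedAddCommGroup X] [NormedSpace ℝ X] [CompleteSpace X]

lemma sumOp_summable (K : Set X) {C : ℝ} (hC : ∀ k : K, ‖(k : X)‖ ≤ C)
    (f : lp (fun _ : ↥K => ℝ) 1) : Summable fun k : K => f k • (k : X) := by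
  refine Summable.of_norm_bounded ((l1_summable_abs f).mul_right C) fun k => ?_
  rw [norm_smul, Real.norm_eq_abs]
  exact mul_le_mul_of_nonneg_left (hC k) (abs_nonneg _)

noncomputable def sumOp (K : Set X) (C : ℝ) (hC : ∀ k : K, ‖(k : X)‖ ≤ C) :
    lp (fun _ : ↥K => ℝ) 1 →L[ℝ] X :=
  LinearMap.mkContinuous
    { toFun := fun f => ∑' k : K, f k • (k : X)
      map_add' := fun f g => by
        rw [← Summable.tsum_add (sumOp_summable K hC f) (sumOp_summable K hC g)]
        exact tsum_congr fun k => by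
          rw [congrFun (lp.coeFn_add f g) k]
          exact add_smul _ _ _
      map_smul' := fun c f => by
        simp only [RingHom.id_apply]
        rw [← ((sumOp_summable K hC f).hasSum.const_smul c).tsum_eq]
        exact tsum_congr fun k => by
          rw [congrFun (lp.coeFn_smul c f) k]
          simp [smul_smul] }
    C (fun f => by
      have hb : ∀ k : K, ‖f k • (k : X)‖ ≤ |f k| * C := fun k => by
        rw [norm_smul, Real.norm_eq_abs]
        exact mul_le_mul_of_nonneg_left (hC k) (abs_nonneg _)
      have h1 : Summable fun k : K => ‖f k • (k : X)‖ :=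
        Summable.of_nonneg_of_le (fun k => norm_nonneg _) hb ((l1_summable_abs f).mul_right C)
      calc ‖∑' k : K, f k • (k : X)‖ ≤ ∑' k : K, ‖f k • (k : X)‖ := norm_tsum_le_tsum_norm h1
        _ ≤ ∑' k : K, |f k| * C := Summable.tsum_le_tsum hb h1 ((l1_summable_abs f).mul_right C)
        _ = (∑' k : K, |f k|) * C := tsum_mul_right
        _ = ‖f‖ * C := by rw [l1_norm_eq]
        _ = C * ‖f‖ := mul_comm _ _)

lemma sumOp_apply (K : Set X) (C : ℝ) (hC : ∀ k : K, ‖(k : X)‖ ≤ C)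
    (f : lp (fun _ : ↥K => ℝ) 1) : sumOp K C hC f = ∑' k : K, f k • (k : X) := rfl

end SumOp

lemma adjointOp_apply {X Y : Type*} [NormedAddCommGroup X] [NormedSpace ℝ X]
    [NormedAddCommGroup Y] [NormedSpace ℝ Y] (T : X →L[ℝ] Y) (f : StrongDual ℝ Y) (v : X) :
    adjointOp T f v = f (T v) := rfl

set_option maxHeartbeats 1000000 in
/-- a bounded `K ⊆ X` is a `p`-Right* set iff there are a Banach space `Y`
and an operator `T : Y → X` with `T` and `T*` Dunford-Pettis `p`-convergent and
`K ⊆ T(B_Y)`. -/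
theorem stmt3 {p : ℝ≥0∞} (hp : 1 ≤ p) {X : Type} [NormedAddCommGroup X] [NormedSpace ℝ X]
    [CompleteSpace X] (K : Set X) (hK : IsBounded K) :
    IsPRightStarSet p K ↔
      ∃ (Y : Type) (_ : NormedAddCommGroup Y) (_ : NormedSpace ℝ Y) (_ : CompleteSpace Y)
        (T : Y →L[ℝ] X), DPpConvergent p T ∧ DPpConvergent p (adjointOp T) ∧
          K ⊆ T '' Metric.closedBall 0 1 := by
  classical
  constructor
  · intro hKR
    obtain ⟨C0, hC0⟩ := isBounded_iff_forall_norm_le.mp hK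
    set C := max C0 0 with hCdef
    have hCk : ∀ k : K, ‖(k : X)‖ ≤ C := fun k => (hC0 k k.2).trans (le_max_left _ _)
    refine ⟨lp (fun _ : ↥K => ℝ) 1, inferInstance, inferInstance, inferInstance,
      sumOp K C hCk, ?_, ?_, ?_⟩
    · intro yseq hy
      have h1 := l1_pRightNull_norm_tendsto hp yseq hy
      refine squeeze_zero (fun n => norm_nonneg _) (fun n => (sumOp K C hCk).le_opNorm _) ?_
      simpa using h1.const_mul ‖sumOp K C hCk‖
    · intro f hf
      have hs := hKR.2 f hf
      refine squeeze_zero (fun n => norm_nonneg _) (fun n => ?_) hs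
      have hs0 : 0 ≤ ⨆ a : K, |f n a.1| := Real.iSup_nonneg fun a => abs_nonneg _
      refine ContinuousLinearMap.opNorm_le_bound _ hs0 fun w => ?_
      have hbdd : BddAbove (Set.range fun a : K => |f n a.1|) := by
        refine ⟨‖f n‖ * C, ?_⟩
        rintro x ⟨a, rfl⟩
        calc |f n a.1| ≤ ‖f n‖ * ‖a.1‖ := by
              simpa [Real.norm_eq_abs] using (f n).le_opNorm a.1
          _ ≤ ‖f n‖ * C := mul_le_mul_of_nonneg_left (hCk a) (norm_nonneg _)
      have hsum := sumOp_summable K hCk w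
      have he : (adjointOp (sumOp K C hCk)) (f n) w = ∑' k : K, w k * f n k := by
        have h2 : (adjointOp (sumOp K C hCk)) (f n) w = f n (∑' k : K, w k • (k : X)) := rfl
        rw [h2, (f n).map_tsum hsum]
        exact tsum_congr fun k => by rw [map_smul, smul_eq_mul]
      have hb2 : ∀ k : K, |w k * f n k| ≤ |w k| * (⨆ a : K, |f n a.1|) := fun k => by
        rw [abs_mul]
        exact mul_le_mul_of_nonneg_left (le_ciSup hbdd k) (abs_nonneg _)
      have hsum2 : Summable fun k : K => |w k * f n k| :=
        Summable.of_nonneg_of_le (fun k => abs_nonneg _) hb2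
          ((l1_summable_abs w).mul_right _)
      rw [he]
      calc ‖∑' k : K, w k * f n k‖ ≤ ∑' k : K, ‖w k * f n k‖ :=
            norm_tsum_le_tsum_norm (by simpa only [Real.norm_eq_abs] using hsum2)
        _ = ∑' k : K, |w k * f n k| := by simp only [Real.norm_eq_abs]
        _ ≤ ∑' k : K, |w k| * (⨆ a : K, |f n a.1|) :=
            Summable.tsum_le_tsum hb2 hsum2 ((l1_summable_abs w).mul_right _)
        _ = (∑' k : K, |w k|) * (⨆ a : K, |f n a.1|) := tsum_mul_right
        _ = ‖w‖ * (⨆ a : K, |f n a.1|) := by rw [l1_norm_eq]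
        _ = (⨆ a : K, |f n a.1|) * ‖w‖ := mul_comm _ _
    · intro a ha
      refine ⟨(lp.single 1 ⟨a, ha⟩ (1 : ℝ) : lp (fun _ : ↥K => ℝ) 1), ?_, ?_⟩
      · rw [Metric.mem_closedBall, dist_zero_right]
        have h1 : ‖(lp.single 1 ⟨a, ha⟩ (1 : ℝ) : lp (fun _ : ↥K => ℝ) 1)‖ = ‖(1 : ℝ)‖ :=
          lp.norm_single (E := fun _ : ↥K => ℝ) (by norm_num) ⟨a, ha⟩ (1 : ℝ)
        rw [h1]; simp
      · show sumOp K C hCk _ = a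
        rw [sumOp_apply, tsum_eq_single (⟨a, ha⟩ : ↥K) ?_]
        · rw [lp.single_apply_self]
          simp
        · intro b hb
          rw [lp.single_apply_ne 1 _ _ hb]
          simp
  · rintro ⟨Y, _, _, _, T, hT, hTstar, hKT⟩
    refine ⟨hK, fun f hf => ?_⟩
    have h0 := hTstar f hf
    refine squeeze_zero (fun n => Real.iSup_nonneg fun a => abs_nonneg _) (fun n => ?_) h0
    refine Real.iSup_le (fun a => ?_) (norm_nonneg _)
    obtain ⟨v, hv, hva⟩ := hKT a.2
    have hv1 : ‖v‖ ≤ 1 := by simpa [dist_zero_right] using Metric.mem_closedBall.mp hv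
    calc |f n a.1| = |f n (T v)| := by rw [hva]
      _ = ‖(adjointOp T) (f n) v‖ := by rw [Real.norm_eq_abs]; rfl
      _ ≤ ‖(adjointOp T) (f n)‖ * ‖v‖ := ((adjointOp T) (f n)).le_opNorm v
      _ ≤ ‖(adjointOp T) (f n)‖ * 1 := mul_le_mul_of_nonneg_left hv1 (norm_nonneg _)
      _ = ‖(adjointOp T) (f n)‖ := mul_one _
end

section
/- For a Banach space X and 1 ≤ p < q ≤ ∞, the following are equivalent: (i) for every Banach space Y, every Dunford-Pettis p-convergent operator T : X → Y has a relatively weakly q-compact adjoint; (ii) the same holds with Y = ℓ∞; (iii) every p-Right subset of X* is relatively weakly q-compact. -/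
open Filter Topology NormedSpace Bornology
open scoped ENNReal ContinuousMap ZeroAtInfty

section Aux

variable {X : Type*} [NormedAddCommGroup X] [NormedSpace ℝ X]

/-- The operator `x ↦ (f n x)_n` into `ℓ∞` built from a bounded sequence of functionals. -/
noncomputable def seqOp (f : ℕ → StrongDual ℝ X) (C : ℝ) (hC : ∀ n, ‖f n‖ ≤ C) :
    X →L[ℝ] lp (fun _ : ℕ => ℝ) ∞ :=
  LinearMap.mkContinuous
    { toFun := fun x => ⟨fun n => f n x, memℓp_infty ⟨C * ‖x‖, by
        rintro r ⟨n, rfl⟩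
        calc ‖f n x‖ ≤ ‖f n‖ * ‖x‖ := (f n).le_opNorm x
          _ ≤ C * ‖x‖ := mul_le_mul_of_nonneg_right (hC n) (norm_nonneg x)⟩⟩
      map_add' := fun x y => lp.ext (funext fun n => map_add (f n) x y)
      map_smul' := fun c x => lp.ext (funext fun n => map_smul (f n) c x) }
    C (fun x => lp.norm_le_of_forall_le
      (mul_nonneg ((norm_nonneg (f 0)).trans (hC 0)) (norm_nonneg x)) (fun n => by
        calc ‖f n x‖ ≤ ‖f n‖ * ‖x‖ := (f n).le_opNorm x
          _ ≤ C * ‖x‖ := mul_le_mul_of_nonneg_right (hC n) (norm_nonneg x)))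

/-- Evaluation at coordinate `n` as a functional on `ℓ∞`. -/
noncomputable def evalLp (n : ℕ) : StrongDual ℝ (lp (fun _ : ℕ => ℝ) ∞) :=
  LinearMap.mkContinuous
    { toFun := fun g => g n
      map_add' := fun g h => congrFun (lp.coeFn_add g h) n
      map_smul' := fun c g => congrFun (lp.coeFn_smul c g) n }
    1 (fun g => by rw [one_mul]; exact lp.norm_apply_le_norm ENNReal.top_ne_zero g n)

theorem evalLp_norm_le (n : ℕ) : ‖evalLp n‖ ≤ 1 :=
  LinearMap.mkContinuous_norm_le _ zero_le_one _

theorem adjoint_seqOp (f : ℕ → StrongDual ℝ X) (C : ℝ) (hC : ∀ n, ‖f n‖ ≤ C) (n : ℕ) :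
    adjointOp (seqOp f C hC) (evalLp n) = f n :=
  ContinuousLinearMap.ext fun _ => rfl

/-- (iii) implies (i). -/
theorem key3to1 {p q : ℝ≥0∞}
    (h3 : ∀ K : Set (StrongDual ℝ X), IsPRightSet p K → RelWeaklyQCompact q K)
    (Y : Type) (_ : NormedAddCommGroup Y) (_ : NormedSpace ℝ Y) (T : X →L[ℝ] Y)
    (hT : DPpConvergent p T) :
    RelWeaklyQCompact q (adjointOp T '' Metric.closedBall 0 1) := by
  apply h3
  constructor
  · rw [isBounded_iff_forall_norm_le]
    refine ⟨‖adjointOp T‖, ?_⟩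
    rintro _ ⟨g, hg, rfl⟩
    calc ‖adjointOp T g‖ ≤ ‖adjointOp T‖ * ‖g‖ := (adjointOp T).le_opNorm g
      _ ≤ ‖adjointOp T‖ * 1 :=
        mul_le_mul_of_nonneg_left (mem_closedBall_zero_iff.mp hg) (ContinuousLinearMap.opNorm_nonneg _)
      _ = ‖adjointOp T‖ := mul_one _
  · intro x hx
    refine squeeze_zero (fun n => Real.iSup_nonneg fun a => abs_nonneg _)
      (fun n => Real.iSup_le (fun a => ?_) (norm_nonneg _)) (hT x hx)
    obtain ⟨g, hg, hga⟩ := a.2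
    rw [← hga]
    calc |adjointOp T g (x n)| = ‖g (T (x n))‖ := (Real.norm_eq_abs _).symm
      _ ≤ ‖g‖ * ‖T (x n)‖ := g.le_opNorm _
      _ ≤ 1 * ‖T (x n)‖ :=
        mul_le_mul_of_nonneg_right (mem_closedBall_zero_iff.mp hg) (norm_nonneg _)
      _ = ‖T (x n)‖ := one_mul _

/-- (ii) implies (iii). -/
theorem key2to3 {p q : ℝ≥0∞}
    (h2 : ∀ T : X →L[ℝ] lp (fun _ : ℕ => ℝ) ∞, DPpConvergent p T →
      RelWeaklyQCompact q (adjointOp T '' Metric.closedBall 0 1))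
    (K : Set (StrongDual ℝ X)) (hK : IsPRightSet p K) : RelWeaklyQCompact q K := by
  intro f hf
  obtain ⟨C, hC⟩ := hK.1.exists_norm_le
  have hC' : ∀ n, ‖f n‖ ≤ C := fun n => hC _ (hf n)
  set T := seqOp f C hC' with hTdef
  have hDP : DPpConvergent p T := by
    intro x hx
    refine squeeze_zero (fun m => norm_nonneg _) (fun m => ?_) (hK.2 x hx)
    refine lp.norm_le_of_forall_le (Real.iSup_nonneg fun g => abs_nonneg _) (fun n => ?_)
    have hbdd : BddAbove (Set.range fun g : K => |g.1 (x m)|) := by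
      refine ⟨C * ‖x m‖, ?_⟩
      rintro r ⟨g, rfl⟩
      calc |g.1 (x m)| = ‖g.1 (x m)‖ := (Real.norm_eq_abs _).symm
        _ ≤ ‖g.1‖ * ‖x m‖ := g.1.le_opNorm _
        _ ≤ C * ‖x m‖ := mul_le_mul_of_nonneg_right (hC _ g.2) (norm_nonneg _)
    have : ((T (x m) : ∀ _ : ℕ, ℝ) n) = f n (x m) := rfl
    rw [this, Real.norm_eq_abs]
    exact le_ciSup hbdd (⟨f n, hf n⟩ : K)
  obtain ⟨a, φ, hφ, hw⟩ := h2 T hDP (fun n => adjointOp T (evalLp n)) (fun n =>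
    ⟨evalLp n, mem_closedBall_zero_iff.mpr (evalLp_norm_le n), rfl⟩)
  refine ⟨a, φ, hφ, ?_⟩
  have heq : (fun n => adjointOp T (evalLp (φ n)) - a) = fun n => f (φ n) - a := by
    funext n
    rw [hTdef, adjoint_seqOp]
  rwa [heq] at hw

end Aux

/-- for `1 ≤ p < q ≤ ∞`, the following are equivalent: (i) every
Dunford-Pettis `p`-convergent operator from `X` into any Banach space has relatively weakly
`q`-compact adjoint; (ii) the same with `Y = ℓ∞`; (iii) every `p`-Right subset of `X*` is
relatively weakly `q`-compact. -/
theorem stmt6 {p q : ℝ≥0∞} (hp : 1 ≤ p) (hpq : p < q) {X : Type} [NormedAddCommGroup X]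
    [NormedSpace ℝ X] [CompleteSpace X] :
    ((∀ (Y : Type) (_ : NormedAddCommGroup Y) (_ : NormedSpace ℝ Y) (_ : CompleteSpace Y)
        (T : X →L[ℝ] Y), DPpConvergent p T →
          RelWeaklyQCompact q (adjointOp T '' Metric.closedBall 0 1)) ↔
      (∀ K : Set (StrongDual ℝ X), IsPRightSet p K → RelWeaklyQCompact q K)) ∧
    ((∀ T : X →L[ℝ] lp (fun _ : ℕ => ℝ) ∞, DPpConvergent p T →
        RelWeaklyQCompact q (adjointOp T '' Metric.closedBall 0 1)) ↔
      (∀ K : Set (StrongDual ℝ X), IsPRightSet p K → RelWeaklyQCompact q K)) := by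
  constructor
  · constructor
    · intro h1 K hK
      exact key2to3 (fun T hT => h1 (lp (fun _ : ℕ => ℝ) ∞) inferInstance inferInstance
        inferInstance T hT) K hK
    · intro h3 Y iY iY2 iY3 T hT
      exact key3to1 h3 Y iY iY2 T hT
  · constructor
    · exact key2to3
    · intro h3 T hT
      exact key3to1 h3 _ _ _ T hT
end

section
/- If X* has the Dunford-Pettis property of order p, then a bounded subset K of X is a p-Right* set if and only if K is a p-(V*) set. -/
open Filter Topology NormedSpace Bornology
open scoped ENNReal ContinuousMap ZeroAtInfty

/-- Pointwise boundedness from weak p-summability (1 ≤ p). -/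
lemma wps_eval_bdd {X : Type*} [NormedAddCommGroup X] [NormedSpace ℝ X] {p : ℝ≥0∞}
    (hp : 1 ≤ p) {f : ℕ → X} (hf : WeaklyPSummable p f) (g : StrongDual ℝ X) :
    BddAbove (Set.range fun n => ‖g (f n)‖) := by
  unfold WeaklyPSummable at hf
  split_ifs at hf with h
  · have := (hf g).norm
    simpa using this.bddAbove_range
  · have := (hf g).of_exponent_ge (le_top : p ≤ ∞)
    exact memℓp_infty_iff.mp this

/-- A weakly p-summable sequence in the dual is norm bounded. -/
lemma wps_dual_bounded {X : Type*} [NormedAddCommGroup X] [NormedSpace ℝ X] [CompleteSpace X]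
    {p : ℝ≥0∞} (hp : 1 ≤ p) {f : ℕ → StrongDual ℝ X} (hf : WeaklyPSummable p f) :
    Bornology.IsBounded (Set.range f) := by
  have hpt : ∀ x : X, ∃ C, ∀ n, ‖f n x‖ ≤ C := by
    intro x
    obtain ⟨C, hC⟩ := wps_eval_bdd hp hf (NormedSpace.inclusionInDoubleDual ℝ X x)
    refine ⟨C, fun n => ?_⟩
    have := hC (Set.mem_range_self n)
    simpa [NormedSpace.dual_def] using this
  obtain ⟨C, hC⟩ := banach_steinhaus hpt
  rw [isBounded_iff_forall_norm_le]
  exact ⟨C, by rintro _ ⟨n, rfl⟩; exact hC n⟩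

/-- Subsequences preserve weak p-summability (1 ≤ p). -/
lemma wps_subseq {X : Type*} [NormedAddCommGroup X] [NormedSpace ℝ X] {p : ℝ≥0∞}
    (hp : 1 ≤ p) {f : ℕ → X} (hf : WeaklyPSummable p f) {ψ : ℕ → ℕ} (hψ : StrictMono ψ) :
    WeaklyPSummable p (fun k => f (ψ k)) := by
  unfold WeaklyPSummable at hf ⊢
  by_cases h : p = ∞
  · rw [if_pos h] at hf ⊢
    exact fun g => (hf g).comp hψ.tendsto_atTop
  · rw [if_neg h] at hf ⊢
    intro g
    have hp0 : 0 < p.toReal :=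
      ENNReal.toReal_pos (fun h0 => by simp [h0] at hp) h
    rw [memℓp_gen_iff hp0]
    have := (memℓp_gen_iff hp0).mp (hf g)
    exact this.comp_injective hψ.injective

/-- Under DPP_p of the dual, a weakly p-summable sequence in the dual is a DP set. -/
lemma wps_dp {X : Type*} [NormedAddCommGroup X] [NormedSpace ℝ X] [CompleteSpace X]
    {p : ℝ≥0∞} (hp : 1 ≤ p)
    (hDPP : ∀ f : ℕ → StrongDual ℝ X, WeaklyPSummable p f →
      ∀ φ : ℕ → StrongDual ℝ (StrongDual ℝ X), WeaklyNull φ →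
        Tendsto (fun n => φ n (f n)) atTop (𝓝 0))
    {f : ℕ → StrongDual ℝ X} (hf : WeaklyPSummable p f) :
    IsDunfordPettisSet (Set.range f) := by
  have hbdd := wps_dual_bounded hp hf
  obtain ⟨C, hC⟩ := isBounded_iff_forall_norm_le.mp hbdd
  refine ⟨hbdd, fun φ hφ => ?_⟩
  set S : ℕ → ℝ := fun n => ⨆ a : Set.range f, |φ n a.1| with hS
  have hBdd : ∀ n, BddAbove (Set.range fun a : Set.range f => |φ n a.1|) := by
    intro n
    refine ⟨‖φ n‖ * C, ?_⟩
    rintro _ ⟨⟨_, j, rfl⟩, rfl⟩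
    calc |φ n (f j)| ≤ ‖φ n‖ * ‖f j‖ := (φ n).le_opNorm (f j)
      _ ≤ ‖φ n‖ * C := by
          exact mul_le_mul_of_nonneg_left (hC _ (Set.mem_range_self j)) (norm_nonneg _)
  have hS0 : ∀ n, 0 ≤ S n := by
    intro n
    calc (0:ℝ) ≤ |φ n (f 0)| := abs_nonneg _
      _ ≤ S n := le_ciSup (hBdd n) ⟨f 0, Set.mem_range_self 0⟩
  by_contra hcon
  rw [Metric.tendsto_atTop] at hcon
  push_neg at hcon
  obtain ⟨ε, hε, hfreq⟩ := hcon
  have hfreq' : ∃ᶠ n in atTop, ε ≤ S n := by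
    rw [Filter.frequently_atTop]
    intro N
    obtain ⟨n, hnN, hn⟩ := hfreq N
    refine ⟨n, hnN, ?_⟩
    rw [Real.dist_eq, sub_zero, abs_of_nonneg (hS0 n)] at hn
    exact hn
  have hev : ∀ j, Tendsto (fun n => φ n (f j)) atTop (𝓝 0) := by
    intro j
    have := hφ (NormedSpace.inclusionInDoubleDual ℝ (StrongDual ℝ X) (f j))
    simpa [NormedSpace.dual_def] using this
  have key : ∀ q : ℕ × ℕ, ∃ r : ℕ × ℕ,
      q.1 < r.1 ∧ q.2 < r.2 ∧ ε / 2 ≤ |φ r.1 (f r.2)| := by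
    rintro ⟨N, M⟩
    have hev2 : ∀ᶠ n in atTop, ∀ j ∈ Set.Iic M, |φ n (f j)| < ε / 2 := by
      rw [eventually_all_finite (Set.finite_Iic M)]
      intro j _
      have h1 : Tendsto (fun n => |φ n (f j)|) atTop (𝓝 0) := by
        simpa using (hev j).abs
      exact h1.eventually_lt_const (by linarith)
    obtain ⟨n, hn1, hn2, hn3⟩ :=
      (hfreq'.and_eventually (hev2.and (eventually_gt_atTop N))).exists
    have hlt : ε / 2 < S n := lt_of_lt_of_le (by linarith) hn1
    obtain ⟨⟨a, j, rfl⟩, ha⟩ := exists_lt_of_lt_ciSup hlt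
    have hjM : M < j := by
      by_contra hj
      push_neg at hj
      exact absurd ha (not_lt.mpr (hn2 j hj).le)
    exact ⟨(n, j), hn3, hjM, ha.le⟩
  set g : ℕ × ℕ → ℕ × ℕ := fun q => (key q).choose with hg
  have hspec : ∀ q : ℕ × ℕ, q.1 < (g q).1 ∧ q.2 < (g q).2 ∧
      ε / 2 ≤ |φ (g q).1 (f (g q).2)| := fun q => (key q).choose_spec
  set u : ℕ → ℕ × ℕ := fun k => g^[k] (g (0, 0)) with hu
  have hsucc : ∀ k, u (k + 1) = g (u k) := by
    intro k
    simp only [hu, Function.iterate_succ_apply']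
  have mono1 : StrictMono (fun k => (u k).1) :=
    strictMono_nat_of_lt_succ fun k => by rw [hsucc k]; exact (hspec (u k)).1
  have mono2 : StrictMono (fun k => (u k).2) :=
    strictMono_nat_of_lt_succ fun k => by rw [hsucc k]; exact (hspec (u k)).2.1
  have hbig : ∀ k, ε / 2 ≤ |φ ((u k).1) (f ((u k).2))| := by
    intro k
    rcases k with _ | k
    · exact (hspec (0, 0)).2.2
    · rw [hsucc k]; exact (hspec (u k)).2.2
  have htend := hDPP (fun k => f ((u k).2)) (wps_subseq hp hf mono2)
    (fun k => φ ((u k).1)) (fun F => (hφ F).comp mono1.tendsto_atTop)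
  have habs : Tendsto (fun k => |φ ((u k).1) (f ((u k).2))|) atTop (𝓝 0) := by
    simpa using htend.abs
  obtain ⟨k, hk⟩ := (habs.eventually_lt_const (by linarith : (0:ℝ) < ε / 2)).exists
  exact absurd (hbig k) (not_le.mpr hk)

/-- if `X*` has the Dunford-Pettis property of order `p`, then a bounded
`K ⊆ X` is a `p`-Right* set iff it is a `p`-(V*) set. -/
theorem stmt8 {p : ℝ≥0∞} (hp : 1 ≤ p) {X : Type*} [NormedAddCommGroup X] [NormedSpace ℝ X]
    [CompleteSpace X]
    (hDPP : ∀ f : ℕ → StrongDual ℝ X, WeaklyPSummable p f →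
      ∀ φ : ℕ → StrongDual ℝ (StrongDual ℝ X), WeaklyNull φ →
        Tendsto (fun n => φ n (f n)) atTop (𝓝 0))
    (K : Set X) (hK : IsBounded K) :
    IsPRightStarSet p K ↔ IsPVStarSet p K := by
  constructor
  · rintro ⟨hKb, hKr⟩
    exact ⟨hK, fun f hf => hKr f ⟨hf, wps_dp hp hDPP hf⟩⟩
  · rintro ⟨hKb, hKv⟩
    exact ⟨hK, fun f hf => hKv f hf.1⟩
end

section
/- If X has the Dunford-Pettis property of order p, then X has Pelczynski's property (V) of order p if and only if X has the p-sequentially Right property. -/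
open Filter Topology NormedSpace Bornology
open scoped ENNReal ContinuousMap ZeroAtInfty

section Aux

variable {p : ℝ≥0∞} {X : Type*} [NormedAddCommGroup X] [NormedSpace ℝ X]

/-- A subsequence (along a strictly monotone map) of a weakly p-summable sequence is
weakly p-summable. -/
lemma WeaklyPSummable.comp_strictMono (hp : 1 ≤ p) {x : ℕ → X}
    (hx : WeaklyPSummable p x) {σ : ℕ → ℕ} (hσ : StrictMono σ) :
    WeaklyPSummable p (x ∘ σ) := by
  by_cases hip : p = ∞
  · rw [WeaklyPSummable, if_pos hip] at hx ⊢
    intro f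
    exact (hx f).comp hσ.tendsto_atTop
  · rw [WeaklyPSummable, if_neg hip] at hx ⊢
    intro f
    have hp0 : p ≠ 0 := (zero_lt_one.trans_le hp).ne'
    have hptr : 0 < p.toReal := ENNReal.toReal_pos hp0 hip
    have := (memℓp_gen_iff hptr).1 (hx f)
    exact (memℓp_gen_iff hptr).2 (this.comp_injective hσ.injective)

/-- A subsequence of a weakly null sequence of functionals is weakly null. -/
lemma WeaklyNull.comp_strictMono {Y : Type*} [NormedAddCommGroup Y] [NormedSpace ℝ Y]
    {f : ℕ → Y} (hf : WeaklyNull f) {σ : ℕ → ℕ} (hσ : StrictMono σ) :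
    WeaklyNull (f ∘ σ) := fun g => (hf g).comp hσ.tendsto_atTop

/-- The range of a weakly p-summable sequence is bounded. -/
lemma WeaklyPSummable.isBounded_range (hp : 1 ≤ p) {x : ℕ → X}
    (hx : WeaklyPSummable p x) : IsBounded (Set.range x) := by
  have hb : ∀ f : StrongDual ℝ X, ∃ C, ∀ n,
      ‖(NormedSpace.inclusionInDoubleDual ℝ X (x n)) f‖ ≤ C := by
    intro f
    have hbdd : BddAbove (Set.range fun n => ‖f (x n)‖) := by
      by_cases hip : p = ∞
      · rw [WeaklyPSummable, if_pos hip] at hx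
        exact ((hx f).norm.bddAbove_range)
      · rw [WeaklyPSummable, if_neg hip] at hx
        exact memℓp_infty_iff.mp ((hx f).of_exponent_ge le_top)
    obtain ⟨C, hC⟩ := hbdd
    exact ⟨C, fun n => hC ⟨n, rfl⟩⟩
  obtain ⟨C, hC⟩ := banach_steinhaus hb
  rw [isBounded_iff_forall_norm_le]
  refine ⟨C, ?_⟩
  rintro y ⟨n, rfl⟩
  calc ‖x n‖ = ‖(NormedSpace.inclusionInDoubleDual ℝ X) (x n)‖ :=
        ((NormedSpace.inclusionInDoubleDualLi ℝ (E := X)).norm_map (x n)).symm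
    _ ≤ C := hC n

/-- Under the Dunford-Pettis property of order `p`, the range of every weakly
p-summable sequence is a Dunford-Pettis set. -/
lemma dp_of_wps (hp : 1 ≤ p)
    (hDPP : ∀ x : ℕ → X, WeaklyPSummable p x → ∀ f : ℕ → StrongDual ℝ X, WeaklyNull f →
      Tendsto (fun n => f n (x n)) atTop (𝓝 0))
    {x : ℕ → X} (hx : WeaklyPSummable p x) : IsDunfordPettisSet (Set.range x) := by
  refine ⟨hx.isBounded_range hp, ?_⟩
  intro f hf
  by_contra hcon
  rw [Metric.tendsto_atTop] at hcon
  push_neg at hcon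
  obtain ⟨ε, hε, hfreq⟩ := hcon
  have hfreq' : ∃ᶠ n in atTop, ε ≤ dist (⨆ a : Set.range x, |f n a.1|) 0 := by
    rw [Filter.frequently_atTop]
    intro N; obtain ⟨n, hn, hn'⟩ := hfreq N; exact ⟨n, hn, hn'⟩
  obtain ⟨φ, hφ, hφP⟩ := Filter.extraction_of_frequently_atTop hfreq'
  -- pick witnesses
  have hpick : ∀ j, ∃ k, ε / 2 < |f (φ j) (x k)| := by
    intro j
    have hnn : (0:ℝ) ≤ ⨆ a : Set.range x, |f (φ j) a.1| :=
      Real.iSup_nonneg fun a => abs_nonneg _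
    have hd := hφP j
    rw [Real.dist_eq, sub_zero, abs_of_nonneg hnn] at hd
    have h1 : ε / 2 < ⨆ a : Set.range x, |f (φ j) a.1| := by linarith
    obtain ⟨a, ha⟩ := exists_lt_of_lt_ciSup h1
    obtain ⟨k, hk⟩ := a.2
    exact ⟨k, by rwa [hk]⟩
  choose k hk using hpick
  by_cases hfin : ∃ m, {j | k j = m}.Infinite
  · -- some index repeats infinitely often
    obtain ⟨m, hm⟩ := hfin
    have : ∃ᶠ j in atTop, k j = m := Nat.frequently_atTop_iff_infinite.2 hm
    obtain ⟨ψ, hψ, hψP⟩ := Filter.extraction_of_frequently_atTop this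
    have hnull : Tendsto (fun i => f (φ (ψ i)) (x m)) atTop (𝓝 0) :=
      (hf ((NormedSpace.inclusionInDoubleDual ℝ X) (x m))).comp (hφ.comp hψ).tendsto_atTop
    have : ∀ᶠ i in atTop, |f (φ (ψ i)) (x m)| < ε / 2 := by
      have := hnull.abs
      rw [abs_zero] at this
      exact this.eventually_lt_const (by linarith)
    obtain ⟨i, hi⟩ := this.exists
    have := hk (ψ i)
    rw [hψP i] at this
    linarith
  · -- k tends to infinity
    push_neg at hfin
    have hktop : Tendsto k atTop atTop := by
      rw [Filter.tendsto_atTop]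
      intro b
      rw [← Nat.cofinite_eq_atTop, Filter.eventually_cofinite]
      have : {j | ¬ b ≤ k j} ⊆ ⋃ m ∈ Finset.range b, {j | k j = m} := by
        intro j hj
        simp only [Set.mem_setOf_eq, not_le] at hj
        simp only [Set.mem_iUnion, Finset.mem_range]
        exact ⟨k j, hj, rfl⟩
      exact Set.Finite.subset (Set.Finite.biUnion (Finset.range b).finite_toSet
        (fun m _ => hfin m)) this
    obtain ⟨ψ, hψ, hkψ⟩ := Filter.strictMono_subseq_of_tendsto_atTop hktop
    have hy : WeaklyPSummable p (x ∘ (k ∘ ψ)) := hx.comp_strictMono hp hkψ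
    have hg : WeaklyNull (f ∘ (φ ∘ ψ)) := hf.comp_strictMono (hφ.comp hψ)
    have hten := hDPP _ hy _ hg
    have : ∀ᶠ i in atTop, |f (φ (ψ i)) (x (k (ψ i)))| < ε / 2 := by
      have := hten.abs
      rw [abs_zero] at this
      exact this.eventually_lt_const (by linarith)
    obtain ⟨i, hi⟩ := this.exists
    have := hk (ψ i)
    linarith

end Aux

/-- if `X` has the Dunford-Pettis property of order `p`, then `X` has
Pelczynski's property (V) of order `p` iff `X` has the `p`-sequentially Right property. -/


theorem stmt10 {p : ℝ≥0∞} (hp : 1 ≤ p) {X : Type*} [NormedAddCommGroup X] [NormedSpace ℝ X]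
    [CompleteSpace X]
    (hDPP : ∀ x : ℕ → X, WeaklyPSummable p x → ∀ f : ℕ → StrongDual ℝ X, WeaklyNull f →
      Tendsto (fun n => f n (x n)) atTop (𝓝 0)) :
    (∀ K : Set (StrongDual ℝ X), IsPVSet p K → RelWeaklyCompact K) ↔ PSR p X := by
  constructor
  · -- (V) of order p implies p-sequentially Right
    intro hV K hK
    apply hV
    refine ⟨hK.1, ?_⟩
    intro x hx
    exact hK.2 x ⟨hx, dp_of_wps hp hDPP hx⟩
  · -- p-sequentially Right implies (V) of order p
    intro hR K hK
    apply hR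
    refine ⟨hK.1, ?_⟩
    intro x hx
    exact hK.2 x hx.1
end
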